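/- arXiv:2511.22391 — 2 statements merged into one kernel-verified Lean document; each statement's English description precedes it below -/
import Mathlib

section
/- For any local epistemic models M and N with worlds w∈W^M and v∈W^N: M,w and N,v are bisimilar (as pointed first-order Kripke models) if and only if SC(M),F^M_w and SC(N),F^N_v are bisimilar (as pointed simplicial models). -/
namespace SimplicialEpistemic

/-! ## Syntax -/

inductive Formula (Ag Xv Pr : Type) : Type
  | atom : Pr → Xv → Formula Ag Xv Pr
  | top : Formula Ag Xv Pr
  | neg : Formula Ag Xv Pr → Formula Ag Xv Pr
  | and : Formula Ag Xv Pr → Formula Ag Xv Pr → Formula Ag Xv Pr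
  | assign : Xv → Ag → Formula Ag Xv Pr → Formula Ag Xv Pr
  | know : Finset Xv → Formula Ag Xv Pr → Formula Ag Xv Pr

namespace Formula

variable {Ag Xv Pr : Type} [DecidableEq Xv]

/-- Free variables of a formula. -/
def FV : Formula Ag Xv Pr → Finset Xv
  | .atom _ x => {x}
  | .top => ∅
  | .neg φ => FV φ
  | .and φ ψ => FV φ ∪ FV ψ
  | .assign x _ φ => FV φ \ {x}
  | .know Xs _ => Xs

/-- Well-formedness: in `K_X α`, the formula `α` must have no free variables.
The language `L` consists of the well-formed formulas. -/
def Wf : Formula Ag Xv Pr → Prop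
  | .atom _ _ => True
  | .top => True
  | .neg φ => Wf φ
  | .and φ ψ => Wf φ ∧ Wf ψ
  | .assign _ _ φ => Wf φ
  | .know _ α => Wf α ∧ FV α = ∅

/-- A sentence is a well-formed formula with no free variables. -/
def Sent (φ : Formula Ag Xv Pr) : Prop := Wf φ ∧ FV φ = ∅

/-- Implication `φ → ψ`, defined as `¬(φ ∧ ¬ψ)`. -/
def impl (φ ψ : Formula Ag Xv Pr) : Formula Ag Xv Pr := .neg (.and φ (.neg ψ))

/-- Biconditional `φ ↔ ψ`. -/
def fiff (φ ψ : Formula Ag Xv Pr) : Formula Ag Xv Pr := .and (impl φ ψ) (impl ψ φ)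

/-- Disjunction `φ ∨ ψ`, defined as `¬(¬φ ∧ ¬ψ)`. -/
def fdisj (φ ψ : Formula Ag Xv Pr) : Formula Ag Xv Pr := .neg (.and (.neg φ) (.neg ψ))

/-- Falsum `⊥ := ¬⊤`. -/
def fbot : Formula Ag Xv Pr := .neg .top

/-- The dual assignment operator `⟨x:=a⟩φ := ¬[x:=a]¬φ`. -/
def dia (x : Xv) (a : Ag) (φ : Formula Ag Xv Pr) : Formula Ag Xv Pr :=
  .neg (.assign x a (.neg φ))

/-- Finite conjunction of a list of formulas. -/
def bigAnd : List (Formula Ag Xv Pr) → Formula Ag Xv Pr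
  | [] => .top
  | φ :: l => .and φ (bigAnd l)

/-- Iterated assignment `[x⃗:=a⃗]φ`. -/
def assigns : List Xv → List Ag → Formula Ag Xv Pr → Formula Ag Xv Pr
  | x :: xs, a :: as, φ => .assign x a (assigns xs as φ)
  | _, _, φ => φ

/-- Substitution `φ[y/x]` of `y` for all free occurrences of `x` in `φ`. -/
def subst (x y : Xv) : Formula Ag Xv Pr → Formula Ag Xv Pr
  | .atom p z => .atom p (if z = x then y else z)
  | .top => .top
  | .neg φ => .neg (subst x y φ)
  | .and φ ψ => .and (subst x y φ) (subst x y ψ)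
  | .assign z a φ => if z = x then .assign z a φ else .assign z a (subst x y φ)
  | .know Xs α => .know (Xs.image fun z => if z = x then y else z) α

/-- Admissibility of `φ[y/x]`: `x` has no free occurrence in `φ` within the scope
of `[y:=b]` for any `b`. -/
def Adm (x y : Xv) : Formula Ag Xv Pr → Prop
  | .atom _ _ => True
  | .top => True
  | .neg φ => Adm x y φ
  | .and φ ψ => Adm x y φ ∧ Adm x y ψ
  | .assign z _ φ => z = x ∨ x ∉ FV φ ∨ (z ≠ y ∧ Adm x y φ)
  | .know _ _ => True

/-- `occurs y φ`: the variable `y` occurs (free or bound) in `φ`. -/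
def occurs (y : Xv) : Formula Ag Xv Pr → Prop
  | .atom _ z => z = y
  | .top => False
  | .neg φ => occurs y φ
  | .and φ ψ => occurs y φ ∨ occurs y ψ
  | .assign z _ φ => z = y ∨ occurs y φ
  | .know Xs α => y ∈ Xs ∨ occurs y α

/-- Propositional evaluation, treating atoms, assignment formulas and knowledge
formulas as propositional atoms. -/
def propEval (v : Formula Ag Xv Pr → Bool) : Formula Ag Xv Pr → Bool
  | .atom p x => v (.atom p x)
  | .top => true
  | .neg φ => !(propEval v φ)
  | .and φ ψ => propEval v φ && propEval v ψ
  | .assign x a φ => v (.assign x a φ)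
  | .know Xs α => v (.know Xs α)

/-- `φ` is a propositional tautology. -/
def Tautology (φ : Formula Ag Xv Pr) : Prop := ∀ v, propEval v φ = true

end Formula

/-! ## Simplicial models and their semantics -/

structure SimpModel (Ag Pr : Type) : Type 1 where
  V : Type
  faces : Set (Set V)
  χ : V → Ag
  ℓ : Pr → Set V

namespace SimpModel

variable {Ag Pr : Type}

/-- The facets: faces contained in no other face. -/
def facets (C : SimpModel Ag Pr) : Set (Set C.V) :=
  {F | F ∈ C.faces ∧ ∀ G ∈ C.faces, F ⊆ G → F = G}

/-- The conditions for being a genuine simplicial model. -/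
def IsModel (C : SimpModel Ag Pr) : Prop :=
  Nonempty C.V ∧ (∅ : Set C.V) ∉ C.faces ∧
    (∀ Y F : Set C.V, Y.Nonempty → Y ⊆ F → F ∈ C.faces → Y ∈ C.faces) ∧
    (∀ v : C.V, {v} ∈ C.faces) ∧
    (∀ F ∈ C.faces, Set.InjOn C.χ F)

end SimpModel

/-! ## First-order Kripke models and their semantics -/

structure KModel (Ag Pr : Type) : Type 1 where
  W : Type
  δ : W → Set Ag
  R : Ag → W → W → Prop
  ρ : Pr → W → Set Ag

namespace KModel

variable {Ag Pr : Type}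

/-- The conditions for being a genuine first-order Kripke model. -/
def IsModel (M : KModel Ag Pr) : Prop :=
  Nonempty M.W ∧ (∀ w : M.W, (M.δ w).Nonempty) ∧
    (∀ (a : Ag) (w v : M.W), M.R a w v → a ∈ M.δ w) ∧
    (∀ (p : Pr) (w : M.W), M.ρ p w ⊆ M.δ w)

end KModel

variable {Ag Xv Pr : Type}

/-- Simplicial satisfaction `C, F, σ ⊩ φ`. -/
def SSat [DecidableEq Xv] (C : SimpModel Ag Pr) :
    Formula Ag Xv Pr → Set C.V → (Xv → Ag) → Prop
  | .atom p x, F, σ => σ x ∈ C.χ '' (F ∩ C.ℓ p)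
  | .top, _, _ => True
  | .neg φ, F, σ => ¬ SSat C φ F σ
  | .and φ ψ, F, σ => SSat C φ F σ ∧ SSat C ψ F σ
  | .assign x a φ, F, σ => a ∈ C.χ '' F → SSat C φ F (Function.update σ x a)
  | .know Xs α, F, σ =>
      ∀ G ∈ C.facets, (∀ x ∈ Xs, σ x ∈ C.χ '' (F ∩ G)) → SSat C α G σ

/-- Kripke satisfaction `M, w, σ ⊨ φ`. -/
def KSat [DecidableEq Xv] (M : KModel Ag Pr) :
    Formula Ag Xv Pr → M.W → (Xv → Ag) → Prop
  | .atom p x, w, σ => σ x ∈ M.ρ p w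
  | .top, _, _ => True
  | .neg φ, w, σ => ¬ KSat M φ w σ
  | .and φ ψ, w, σ => KSat M φ w σ ∧ KSat M ψ w σ
  | .assign x a φ, w, σ => a ∈ M.δ w → KSat M φ w (Function.update σ x a)
  | .know Xs α, w, σ => ∀ v : M.W, (∀ x ∈ Xs, M.R (σ x) w v) → KSat M α v σ

/-! ## Bisimulations -/

/-- Bisimulation between simplicial models. -/
def IsSBisim (C D : SimpModel Ag Pr) (Z : Set (Set C.V × Set D.V)) : Prop :=
  (∀ q ∈ Z, q.1 ∈ C.facets ∧ q.2 ∈ D.facets) ∧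
    ∀ F G, (F, G) ∈ Z →
      (C.χ '' F = D.χ '' G ∧ ∀ p : Pr, C.χ '' (F ∩ C.ℓ p) = D.χ '' (G ∩ D.ℓ p)) ∧
      (∀ (As : Set Ag) (F' : Set C.V), F' ∈ C.facets → As ⊆ C.χ '' (F ∩ F') →
        ∃ G' ∈ D.facets, As ⊆ D.χ '' (G ∩ G') ∧ (F', G') ∈ Z) ∧
      (∀ (As : Set Ag) (G' : Set D.V), G' ∈ D.facets → As ⊆ D.χ '' (G ∩ G') →
        ∃ F' ∈ C.facets, As ⊆ C.χ '' (F ∩ F') ∧ (F', G') ∈ Z)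

/-- Bisimulation between first-order Kripke models. -/
def IsKBisim (M N : KModel Ag Pr) (Z : Set (M.W × N.W)) : Prop :=
  ∀ w v, (w, v) ∈ Z →
    (M.δ w = N.δ v ∧ ∀ p : Pr, M.ρ p w = N.ρ p v) ∧
    (∀ (As : Set Ag) (w' : M.W), (∀ a ∈ As, M.R a w w') →
      ∃ v' : N.W, (∀ a ∈ As, N.R a v v') ∧ (w', v') ∈ Z) ∧
    (∀ (As : Set Ag) (v' : N.W), (∀ a ∈ As, N.R a v v') →
      ∃ w' : M.W, (∀ a ∈ As, M.R a w w') ∧ (w', v') ∈ Z)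

/-! ## Local epistemic models -/

/-- (Local S5): the restriction of `R_a` to `{w | a ∈ δ(w)}` is an equivalence relation. -/
def LocalS5 (M : KModel Ag Pr) : Prop :=
  ∀ a : Ag, Equivalence (fun w v : {w : M.W // a ∈ M.δ w} => M.R a w.1 v.1)

/-- (Individually Increasing Domain). -/
def IndInc (M : KModel Ag Pr) : Prop :=
  ∀ (a : Ag) (w v : M.W), a ∈ M.δ w → M.R a w v → a ∈ M.δ v

/-- (Local Predicates). -/
def LocalPred (M : KModel Ag Pr) : Prop :=
  ∀ (p : Pr) (a : Ag) (w v : M.W), a ∈ M.ρ p w → M.R a w v → a ∈ M.ρ p v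

/-- (Collectively Decreasing Domain). -/
def CollDec (M : KModel Ag Pr) : Prop :=
  ∀ w v : M.W, (∀ a ∈ M.δ w, M.R a w v) → M.δ v ⊆ M.δ w

/-- A local epistemic model. -/
def IsLEM (M : KModel Ag Pr) : Prop :=
  LocalS5 M ∧ IndInc M ∧ LocalPred M ∧ CollDec M

/-- (Properness): `⋂_{a ∈ δ(w)} R_a(w) = {w}` for every `w`. -/
def Proper (M : KModel Ag Pr) : Prop :=
  ∀ w : M.W, {v : M.W | ∀ a ∈ M.δ w, M.R a w v} = {w}

/-! ## Properization -/

/-- `[w]_δ = ⋂_{a ∈ δ(w)} R_a(w)`. -/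
def cell (M : KModel Ag Pr) (w : M.W) : Set M.W := {v | ∀ a ∈ M.δ w, M.R a w v}

/-- The properization `M^pr` of a Kripke model. -/
noncomputable def properize (M : KModel Ag Pr) : KModel Ag Pr where
  W := {S : Set M.W // ∃ w : M.W, S = cell M w}
  δ := fun S => M.δ S.2.choose
  R := fun a S T => ∃ w v : M.W, S.1 = cell M w ∧ T.1 = cell M v ∧ M.R a w v
  ρ := fun p S => M.ρ p S.2.choose

/-! ## The maps LEM and SC -/

/-- `LEM(C)`: the first-order Kripke model associated to a simplicial model. -/
def LEMof (C : SimpModel Ag Pr) : KModel Ag Pr where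
  W := {F : Set C.V // F ∈ C.facets}
  δ := fun F => C.χ '' F.1
  R := fun a F G => a ∈ C.χ '' (F.1 ∩ G.1)
  ρ := fun p F => C.χ '' (F.1 ∩ C.ℓ p)

/-- Vertices of `SC(M)`: pairs `(a, [w]_a)` with `a ∈ δ(w)`, `[w]_a = R_a(w)`. -/
abbrev SCVert (M : KModel Ag Pr) : Type :=
  {u : Ag × Set M.W // ∃ w : M.W, u.1 ∈ M.δ w ∧ u.2 = {v : M.W | M.R u.1 w v}}

/-- `F^M_w = {(a, [w]_a) | a ∈ δ(w)}`. -/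
def SCface (M : KModel Ag Pr) (w : M.W) : Set (SCVert M) :=
  {u | u.1.1 ∈ M.δ w ∧ u.1.2 = {v : M.W | M.R u.1.1 w v}}

/-- `SC(M)`: the simplicial model associated to a Kripke model. -/
def SCof (M : KModel Ag Pr) : SimpModel Ag Pr where
  V := SCVert M
  faces := {F : Set (SCVert M) | F.Nonempty ∧ ∃ w : M.W, F ⊆ SCface M w}
  χ := fun u => u.1.1
  ℓ := fun p => {u | ∃ w : M.W, u.1.1 ∈ M.ρ p w ∧ u.1.2 = {v : M.W | M.R u.1.1 w v}}

/-! ## Isomorphisms -/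

/-- Isomorphism of first-order Kripke models. -/
structure KIso (M N : KModel Ag Pr) where
  toEquiv : M.W ≃ N.W
  δ_eq : ∀ w : M.W, N.δ (toEquiv w) = M.δ w
  R_iff : ∀ (a : Ag) (w v : M.W), N.R a (toEquiv w) (toEquiv v) ↔ M.R a w v
  ρ_eq : ∀ (p : Pr) (w : M.W), N.ρ p (toEquiv w) = M.ρ p w

/-- Isomorphism of simplicial models. -/
structure SIso (C D : SimpModel Ag Pr) where
  toEquiv : C.V ≃ D.V
  face_iff : ∀ F : Set C.V, F ∈ C.faces ↔ (toEquiv '' F) ∈ D.faces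
  χ_eq : ∀ v : C.V, D.χ (toEquiv v) = C.χ v
  ℓ_iff : ∀ (p : Pr) (v : C.V), toEquiv v ∈ D.ℓ p ↔ v ∈ C.ℓ p

/-! ## The proof system LEL -/

/-- The axiom system `LEL` (over the well-formed fragment of the language). -/
inductive LEL [DecidableEq Xv] : Formula Ag Xv Pr → Prop
  | taut {φ} : Formula.Wf φ → Formula.Tautology φ → LEL φ
  | kk {Xs : Finset Xv} {α β} : Formula.Sent α → Formula.Sent β →
      LEL (Formula.impl (.know Xs (Formula.impl α β))
        (Formula.impl (.know Xs α) (.know Xs β)))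
  | mono {Xs Ys : Finset Xv} {α} : Xs ⊆ Ys → Formula.Sent α →
      LEL (Formula.impl (.know Xs α) (.know Ys α))
  | kasgn {x : Xv} {a : Ag} {φ ψ} : Formula.Wf φ → Formula.Wf ψ →
      LEL (Formula.impl (.assign x a (Formula.impl φ ψ))
        (Formula.impl (.assign x a φ) (.assign x a ψ)))
  | det {x : Xv} {a : Ag} {φ} : Formula.Wf φ →
      LEL (Formula.impl (Formula.dia x a φ) (.assign x a φ))
  | tr {x : Xv} {a : Ag} {φ} : Formula.Wf φ → x ∉ Formula.FV φ →
      LEL (Formula.impl φ (.assign x a φ))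
  | sub {x y : Xv} {a : Ag} {φ} : Formula.Wf φ → Formula.Adm x y φ →
      LEL (.assign y a (Formula.impl (.assign x a φ) (Formula.subst x y φ)))
  | com {x y : Xv} {a b : Ag} {φ} : Formula.Wf φ → x ≠ y →
      LEL (Formula.impl (.assign x a (.assign y b φ)) (.assign y b (.assign x a φ)))
  | ui {x : Xv} {φ} (l : List Ag) : Formula.Wf φ → l.Nodup → (∀ a : Ag, a ∈ l) →
      LEL (Formula.impl (Formula.bigAnd (l.map fun a => .assign x a φ)) φ)
  | tK {Xs : Finset Xv} {α} : Formula.Sent α → LEL (Formula.impl (.know Xs α) α)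
  | kni {xs : List Xv} {as : List Ag} {α} :
      Formula.Sent α → xs.Nodup → xs.length = as.length →
      LEL (Formula.assigns xs as (Formula.impl (.neg (.know xs.toFinset α))
        (.know xs.toFinset (Formula.assigns xs as (.neg (.know xs.toFinset α))))))
  | epi {x : Xv} {a : Ag} : LEL (.assign x a (.know {x} (Formula.dia x a .top)))
  | api {x : Xv} {a : Ag} {p : Pr} :
      LEL (.assign x a (Formula.impl (.atom p x) (.know {x} (.assign x a (.atom p x)))))
  | eni {xs : List Xv} {as : List Ag} {z : Xv} (l : List Ag) :
      xs.Nodup → xs.length = as.length → l.Nodup → (∀ b : Ag, b ∈ l ↔ b ∉ as) →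
      LEL (Formula.assigns xs as
        (Formula.impl (Formula.bigAnd (l.map fun b => .assign z b Formula.fbot))
          (.know xs.toFinset (Formula.bigAnd (l.map fun b => .assign z b Formula.fbot)))))
  | mp {φ ψ} : LEL (Formula.impl φ ψ) → LEL φ → LEL ψ
  | necK {α} : Formula.Sent α → LEL α → LEL (.know ∅ α)
  | necA {x : Xv} {a : Ag} {φ} : LEL φ → LEL (.assign x a φ)

/-- `Γ` is consistent in `LEL`: no finite subset has a provably false conjunction. -/
def Consistent [DecidableEq Xv] (Γ : Set (Formula Ag Xv Pr)) : Prop :=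
  ¬ ∃ l : List (Formula Ag Xv Pr), (∀ φ ∈ l, φ ∈ Γ) ∧ LEL (.neg (Formula.bigAnd l))

end SimplicialEpistemic

namespace SimplicialEpistemic

section Aux

variable {Ag Pr : Type} {M : KModel Ag Pr}

lemma R_delta (hM : M.IsModel) {a : Ag} {w v : M.W} (h : M.R a w v) : a ∈ M.δ w :=
  hM.2.2.1 a w v h

lemma R_delta' (hM : M.IsModel) (hl : IsLEM M) {a : Ag} {w v : M.W} (h : M.R a w v) :
    a ∈ M.δ v := hl.2.1 a w v (R_delta hM h) h

lemma R_refl (hl : IsLEM M) {a : Ag} {w : M.W} (h : a ∈ M.δ w) : M.R a w w :=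
  (hl.1 a).refl ⟨w, h⟩

lemma R_symm (hM : M.IsModel) (hl : IsLEM M) {a : Ag} {w v : M.W} (h : M.R a w v) :
    M.R a v w :=
  (hl.1 a).symm (x := ⟨w, R_delta hM h⟩) (y := ⟨v, R_delta' hM hl h⟩) h

lemma R_trans (hM : M.IsModel) (hl : IsLEM M) {a : Ag} {w v x : M.W}
    (h : M.R a w v) (h' : M.R a v x) : M.R a w x :=
  (hl.1 a).trans (x := ⟨w, R_delta hM h⟩) (y := ⟨v, R_delta' hM hl h⟩)
    (z := ⟨x, R_delta' hM hl h'⟩) h h'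

lemma class_eq (hM : M.IsModel) (hl : IsLEM M) {a : Ag} {w v : M.W} (h : M.R a w v) :
    {x : M.W | M.R a w x} = {x : M.W | M.R a v x} :=
  Set.ext fun x => ⟨fun hx => R_trans hM hl (R_symm hM hl h) hx,
    fun hx => R_trans hM hl h hx⟩

lemma R_of_class_eq (hl : IsLEM M) {a : Ag} {w v : M.W} (hv : a ∈ M.δ v)
    (h : {x : M.W | M.R a w x} = {x : M.W | M.R a v x}) : M.R a w v := by
  have : v ∈ {x : M.W | M.R a v x} := R_refl hl hv
  rw [← h] at this
  exact this

/-- The canonical vertex `(a, [w]_a)` for `a ∈ δ(w)`. -/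
def vert (M : KModel Ag Pr) (w : M.W) (a : Ag) (ha : a ∈ M.δ w) : SCVert M :=
  ⟨(a, {v : M.W | M.R a w v}), w, ha, rfl⟩

lemma vert_mem (M : KModel Ag Pr) (w : M.W) (a : Ag) (ha : a ∈ M.δ w) :
    vert M w a ha ∈ SCface M w := ⟨ha, rfl⟩

lemma chi_SCface (w : M.W) : (SCof M).χ '' SCface M w = M.δ w := by
  ext a
  constructor
  · rintro ⟨u, ⟨h1, h2⟩, rfl⟩
    exact h1
  · intro ha
    exact ⟨vert M w a ha, vert_mem M w a ha, rfl⟩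

lemma mem_chi_inter (hM : M.IsModel) (hl : IsLEM M) {a : Ag} {w w' : M.W} :
    a ∈ (SCof M).χ '' (SCface M w ∩ SCface M w') ↔ M.R a w w' := by
  constructor
  · rintro ⟨u, ⟨⟨h1, h2⟩, ⟨h1', h2'⟩⟩, rfl⟩
    exact R_of_class_eq hl h1' (h2.symm.trans h2')
  · intro h
    refine ⟨vert M w a (R_delta hM h), ⟨vert_mem M w a (R_delta hM h),
      ⟨R_delta' hM hl h, ?_⟩⟩, rfl⟩
    exact class_eq hM hl h

lemma chi_ell (hM : M.IsModel) (hl : IsLEM M) (p : Pr) (w : M.W) :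
    (SCof M).χ '' (SCface M w ∩ (SCof M).ℓ p) = M.ρ p w := by
  ext a
  constructor
  · rintro ⟨u, ⟨⟨h1, h2⟩, ⟨w0, hρ, h2'⟩⟩, rfl⟩
    have hδ0 : u.1.1 ∈ M.δ w0 := hM.2.2.2 p w0 hρ
    have hR : M.R u.1.1 w w0 := R_of_class_eq hl hδ0 (h2.symm.trans h2')
    exact hl.2.2.1 p u.1.1 w0 w hρ (R_symm hM hl hR)
  · intro ha
    have hδ : a ∈ M.δ w := hM.2.2.2 p w ha
    exact ⟨vert M w a hδ, ⟨vert_mem M w a hδ, ⟨w, ha, rfl⟩⟩, rfl⟩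

lemma SCface_nonempty (hM : M.IsModel) (w : M.W) : (SCface M w).Nonempty := by
  obtain ⟨a, ha⟩ := hM.2.1 w
  exact ⟨vert M w a ha, vert_mem M w a ha⟩

lemma SCface_mem_faces (hM : M.IsModel) (w : M.W) : SCface M w ∈ (SCof M).faces :=
  ⟨SCface_nonempty hM w, w, subset_rfl⟩

lemma SCface_subset (hM : M.IsModel) (hl : IsLEM M) {w w' : M.W}
    (h : SCface M w ⊆ SCface M w') : SCface M w' ⊆ SCface M w := by
  have hR : ∀ a ∈ M.δ w, M.R a w w' := by
    intro a ha
    obtain ⟨h1, h2⟩ := h (vert_mem M w a ha)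
    exact R_of_class_eq hl h1 h2
  have hδ : M.δ w' ⊆ M.δ w := hl.2.2.2 w w' hR
  rintro u ⟨h1, h2⟩
  have hb : u.1.1 ∈ M.δ w := hδ h1
  have hRb : M.R u.1.1 w w' := hR _ hb
  exact ⟨hb, h2.trans (class_eq hM hl hRb).symm⟩

lemma SCface_facet (hM : M.IsModel) (hl : IsLEM M) (w : M.W) :
    SCface M w ∈ (SCof M).facets := by
  refine ⟨SCface_mem_faces hM w, ?_⟩
  rintro G ⟨hGne, w', hGw'⟩ hsub
  exact hsub.antisymm (hGw'.trans (SCface_subset hM hl (hsub.trans hGw')))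

lemma facet_eq (hM : M.IsModel) {G : Set (SCVert M)} (hG : G ∈ (SCof M).facets) :
    ∃ w : M.W, G = SCface M w := by
  obtain ⟨⟨hne, w, hsub⟩, hmax⟩ := hG
  exact ⟨w, hmax _ (SCface_mem_faces hM w) hsub⟩

end Aux

/-- pointed local epistemic models are bisimilar iff their
associated pointed simplicial models under `SC` are bisimilar. -/
theorem bisim_iff_SC_bisim
    {Ag Pr : Type} [Fintype Ag] [Nonempty Ag] [DecidableEq Ag] [Countable Pr]
    (M N : KModel Ag Pr) (hM : M.IsModel) (hN : N.IsModel)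
    (hMl : IsLEM M) (hNl : IsLEM N) (w : M.W) (v : N.W) :
    (∃ Z, IsKBisim M N Z ∧ (w, v) ∈ Z) ↔
      (∃ Z, IsSBisim (SCof M) (SCof N) Z ∧ (SCface M w, SCface N v) ∈ Z) := by
  constructor
  · rintro ⟨Z, hZ, hwv⟩
    refine ⟨{q | ∃ w' v', (w', v') ∈ Z ∧ q = (SCface M w', SCface N v')},
      ⟨?_, ?_⟩, ⟨w, v, hwv, rfl⟩⟩
    · rintro q ⟨w', v', hZ', rfl⟩
      exact ⟨SCface_facet hM hMl w', SCface_facet hN hNl v'⟩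
    · rintro F G ⟨w', v', hZ', heq⟩
      obtain ⟨hF, hG⟩ := Prod.mk.injEq .. ▸ heq
      subst hF; subst hG
      obtain ⟨⟨hδ, hρ⟩, hzig, hzag⟩ := hZ w' v' hZ'
      refine ⟨⟨?_, ?_⟩, ?_, ?_⟩
      · rw [chi_SCface, chi_SCface, hδ]
      · intro p
        rw [chi_ell hM hMl, chi_ell hN hNl, hρ]
      · intro As F' hF' hsub
        obtain ⟨w'', rfl⟩ := facet_eq hM hF'
        have hR : ∀ a ∈ As, M.R a w' w'' := fun a ha =>
          (mem_chi_inter hM hMl).1 (hsub ha)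
        obtain ⟨v'', hRv, hZ''⟩ := hzig As w'' hR
        refine ⟨SCface N v'', SCface_facet hN hNl v'', ?_, w'', v'', hZ'', rfl⟩
        intro a ha
        exact (mem_chi_inter hN hNl).2 (hRv a ha)
      · intro As G' hG' hsub
        obtain ⟨v'', rfl⟩ := facet_eq hN hG'
        have hR : ∀ a ∈ As, N.R a v' v'' := fun a ha =>
          (mem_chi_inter hN hNl).1 (hsub ha)
        obtain ⟨w'', hRw, hZ''⟩ := hzag As v'' hR
        refine ⟨SCface M w'', SCface_facet hM hMl w'', ?_, w'', v'', hZ'', rfl⟩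
        intro a ha
        exact (mem_chi_inter hM hMl).2 (hRw a ha)
  · rintro ⟨Z', hZ', hwv⟩
    refine ⟨{q | (SCface M q.1, SCface N q.2) ∈ Z'}, ?_, hwv⟩
    intro w' v' h
    obtain ⟨⟨hδ, hρ⟩, hzig, hzag⟩ := hZ'.2 (SCface M w') (SCface N v') h
    refine ⟨⟨?_, ?_⟩, ?_, ?_⟩
    · rw [chi_SCface, chi_SCface] at hδ
      exact hδ
    · intro p
      have := hρ p
      rw [chi_ell hM hMl, chi_ell hN hNl] at this
      exact this
    · intro As w'' hR
      have hsub : As ⊆ (SCof M).χ '' (SCface M w' ∩ SCface M w'') := fun a ha =>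
        (mem_chi_inter hM hMl).2 (hR a ha)
      obtain ⟨G', hG', hsub', hZ''⟩ := hzig As (SCface M w'') (SCface_facet hM hMl w'') hsub
      obtain ⟨v'', rfl⟩ := facet_eq hN hG'
      exact ⟨v'', fun a ha => (mem_chi_inter hN hNl).1 (hsub' ha), hZ''⟩
    · intro As v'' hR
      have hsub : As ⊆ (SCof N).χ '' (SCface N v' ∩ SCface N v'') := fun a ha =>
        (mem_chi_inter hN hNl).2 (hR a ha)
      obtain ⟨F', hF', hsub', hZ''⟩ := hzag As (SCface N v'') (SCface_facet hN hNl v'') hsub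
      obtain ⟨w'', rfl⟩ := facet_eq hM hF'
      exact ⟨w'', fun a ha => (mem_chi_inter hM hMl).1 (hsub' ha), hZ''⟩

end SimplicialEpistemic
end

section
/- Positive introspection for intensional distributed knowledge: for any formula φ with at most one free variable x, if ⊢ [x:=a](φ → K_x[x:=a]φ) for every a∈𝐀, then for every sentence α, ⊢ K_φα → K_φK_φα in the proof system LEL. -/
namespace SimplicialEpistemic

variable {Ag Xv Pr : Type} [Fintype Ag] [DecidableEq Ag] [DecidableEq Xv]

/-- `φ!(S)`: the group defined by `φ` (with free variable `x`) is exactly `S`.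
Here `ea` provides enumerations (as lists) of finite sets of agents. -/
def bang (φ : Formula Ag Xv Pr) (x : Xv) (ea : Finset Ag → List Ag)
    (S : Finset Ag) : Formula Ag Xv Pr :=
  .and (Formula.bigAnd ((ea S).map fun a => Formula.dia x a φ))
    (Formula.bigAnd ((ea Sᶜ).map fun b => .assign x b (.neg φ)))

/-- Intensional distributed knowledge `K_φ α`, defined as
`⋀_{A ⊆ 𝐀} (φ!(A) → [x⃗_A := a⃗_A] K_{x⃗_A} α)`. -/
noncomputable def Kint (φ : Formula Ag Xv Pr) (x : Xv) (ea : Finset Ag → List Ag)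
    (ev : Finset Ag → List Xv) (α : Formula Ag Xv Pr) : Formula Ag Xv Pr :=
  Formula.bigAnd (((Finset.univ : Finset (Finset Ag)).toList).map fun S =>
    Formula.impl (bang φ x ea S)
      (Formula.assigns (ev S) (ea S) (.know (ev S).toFinset α)))

end SimplicialEpistemic

/-!
Fix a group `B` with `φ!(B)` and assume `K_φ α`, so that the group `B` knows `α`. By `KNI`
and `T` distributed knowledge is positively introspective, so `B` knows that it knows `α`.
Positive introspection of `φ`, together with `EPI`, makes every `⟨x:=a⟩φ` with `a ∈ B` known
to `a`, hence to `B`. Finally, `⋀_{a ∈ B} ⟨x:=a⟩φ` together with `B`'s knowledge of `α` implies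
`K_φ α`: if `φ!(S)` then `B ⊆ S`, and distributed knowledge is monotone in the group, since the
variables of `[x⃗:=a⃗]K_{x⃗}` can be renamed (`SUB`, `TR`), permuted (`COM`) and added
(`TR`, `MONO`).
-/

theorem Infinite.exists_nodup_list_forall_notMem {α : Type} [DecidableEq α] [Infinite α]
    (s : Finset α) (n : ℕ) :
    ∃ ws : List α, ws.length = n ∧ ws.Nodup ∧ ∀ w ∈ ws, w ∉ s := by
  obtain ⟨t, hst, ht⟩ := Infinite.exists_superset_card_eq s (s.card + n) (by omega)
  refine ⟨(t \ s).toList, ?_, (t \ s).nodup_toList, fun w hw => ?_⟩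
  · rw [Finset.length_toList, Finset.card_sdiff_of_subset hst]
    omega
  · exact (Finset.mem_sdiff.1 (Finset.mem_toList.1 hw)).2

namespace SimplicialEpistemic

namespace Formula

variable {Ag Xv Pr : Type} {φ ψ : Formula Ag Xv Pr}

def assignAll (l : List (Xv × Ag)) (φ : Formula Ag Xv Pr) : Formula Ag Xv Pr :=
  l.foldr (fun p ψ => assign p.1 p.2 ψ) φ

@[simp] lemma assignAll_nil : assignAll [] φ = φ := rfl

@[simp] lemma assignAll_cons (p : Xv × Ag) (l : List (Xv × Ag)) :
    assignAll (p :: l) φ = assign p.1 p.2 (assignAll l φ) := rfl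

lemma assigns_eq_assignAll (xs : List Xv) (as : List Ag) :
    assigns xs as φ = assignAll (xs.zip as) φ := by
  induction xs generalizing as with
  | nil => rfl
  | cons x xs ih => cases as <;> simp [assigns, ih]

@[simp] lemma propEval_neg {v} : propEval v (neg φ) = !propEval v φ := rfl
@[simp] lemma propEval_and {v} : propEval v (and φ ψ) = (propEval v φ && propEval v ψ) := rfl
@[simp] lemma propEval_impl {v} : propEval v (impl φ ψ) = (!propEval v φ || propEval v ψ) := by
  simp [impl, propEval]

variable [DecidableEq Xv] {x : Xv} {a : Ag} {X : Finset Xv}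

@[simp] lemma wf_atom {p : Pr} : Wf (atom p x : Formula Ag Xv Pr) := trivial
@[simp] lemma wf_top : Wf (top : Formula Ag Xv Pr) := trivial
@[simp] lemma wf_neg : Wf (neg φ) ↔ Wf φ := Iff.rfl
@[simp] lemma wf_and : Wf (and φ ψ) ↔ Wf φ ∧ Wf ψ := Iff.rfl
@[simp] lemma wf_impl : Wf (impl φ ψ) ↔ Wf φ ∧ Wf ψ := Iff.rfl
@[simp] lemma wf_assign : Wf (assign x a φ) ↔ Wf φ := Iff.rfl
@[simp] lemma wf_dia : Wf (dia x a φ) ↔ Wf φ := Iff.rfl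
@[simp] lemma wf_know : Wf (know X φ) ↔ Wf φ ∧ FV φ = ∅ := Iff.rfl

@[simp] lemma fv_atom {p : Pr} : FV (atom p x : Formula Ag Xv Pr) = {x} := rfl
@[simp] lemma fv_top : FV (top : Formula Ag Xv Pr) = ∅ := rfl
@[simp] lemma fv_neg : FV (neg φ) = FV φ := rfl
@[simp] lemma fv_and : FV (and φ ψ) = FV φ ∪ FV ψ := rfl
@[simp] lemma fv_impl : FV (impl φ ψ) = FV φ ∪ FV ψ := rfl
@[simp] lemma fv_assign : FV (assign x a φ) = FV φ \ {x} := rfl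
@[simp] lemma fv_know : FV (know X φ) = X := rfl

@[simp] lemma wf_bigAnd {l : List (Formula Ag Xv Pr)} : Wf (bigAnd l) ↔ ∀ φ ∈ l, Wf φ := by
  induction l with
  | nil => simp [bigAnd]
  | cons φ l ih => simp [bigAnd, ih]

@[simp] lemma wf_assignAll {l : List (Xv × Ag)} : Wf (assignAll l φ) ↔ Wf φ := by
  induction l with
  | nil => rfl
  | cons p l ih => simpa using ih

lemma fv_assignAll (l : List (Xv × Ag)) :
    FV (assignAll l φ) = FV φ \ (l.map Prod.fst).toFinset := by
  induction l with
  | nil => simp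
  | cons p l ih =>
    ext
    simp [ih]
    tauto

lemma wf_subst {y : Xv} (h : Wf φ) : Wf (subst x y φ) := by
  induction φ with
  | atom | top => trivial
  | neg φ ih => exact ih h
  | and φ ψ ih₁ ih₂ => exact ⟨ih₁ h.1, ih₂ h.2⟩
  | assign z a φ ih =>
    simp only [subst]
    split <;> [exact h; exact ih h]
  | know => exact h

@[simp] lemma subst_self : subst x x φ = φ := by
  induction φ with
  | atom p z => by_cases h : z = x <;> simp [subst, h]
  | top => rfl
  | neg φ ih => simp [subst, ih]
  | and φ ψ ih₁ ih₂ => simp [subst, ih₁, ih₂]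
  | assign z a φ ih => by_cases h : z = x <;> simp [subst, h, ih]
  | know X α =>
    simp only [subst, know.injEq, and_true]
    conv_rhs => rw [← Finset.image_id (s := X)]
    exact Finset.image_congr fun z _ => by by_cases h : z = x <;> simp [h]

lemma adm_self : Adm x x φ := by
  induction φ with
  | atom | top | know => trivial
  | neg φ ih => exact ih
  | and φ ψ ih₁ ih₂ => exact ⟨ih₁, ih₂⟩
  | assign z a φ ih => by_cases h : z = x <;> simp [Adm, h, ih]

lemma subst_assignAll {y : Xv} {l : List (Xv × Ag)} (h : x ∉ l.map Prod.fst) :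
    subst x y (assignAll l φ) = assignAll l (subst x y φ) := by
  induction l with
  | nil => rfl
  | cons p l ih =>
    simp only [List.map_cons, List.mem_cons, not_or] at h
    simp [subst, Ne.symm h.1, ih h.2]

lemma adm_assignAll {y : Xv} {l : List (Xv × Ag)} (h : y ∉ l.map Prod.fst) (hφ : Adm x y φ) :
    Adm x y (assignAll l φ) := by
  induction l with
  | nil => exact hφ
  | cons p l ih =>
    simp only [List.map_cons, List.mem_cons, not_or] at h
    exact .inr (.inr ⟨Ne.symm h.1, ih h.2⟩)

lemma sent_top : Sent (top : Formula Ag Xv Pr) := ⟨trivial, rfl⟩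

lemma Sent.neg (h : Sent φ) : Sent (neg φ) := h

lemma Sent.and (h₁ : Sent φ) (h₂ : Sent ψ) : Sent (and φ ψ) :=
  ⟨⟨h₁.1, h₂.1⟩, by simp [h₁.2, h₂.2]⟩

lemma Sent.impl (h₁ : Sent φ) (h₂ : Sent ψ) : Sent (impl φ ψ) := (h₁.and h₂.neg).neg

lemma Sent.wf_know (h : Sent φ) (X : Finset Xv) : Wf (know X φ) := h

lemma sent_bigAnd {l : List (Formula Ag Xv Pr)} (h : ∀ φ ∈ l, Sent φ) : Sent (bigAnd l) := by
  induction l with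
  | nil => exact ⟨trivial, rfl⟩
  | cons φ l ih =>
    exact (h φ (by simp)).and (ih fun ψ hψ => h ψ (by simp [hψ]))

lemma sent_assign_of_fv_subset (hφ : Wf φ) (hfv : FV φ ⊆ {x}) : Sent (assign x a φ) :=
  ⟨hφ, Finset.sdiff_eq_empty_iff_subset.2 hfv⟩

lemma sent_dia_of_fv_subset (hφ : Wf φ) (hfv : FV φ ⊆ {x}) : Sent (dia x a φ) :=
  (sent_assign_of_fv_subset (φ := neg φ) hφ hfv).neg

/-- The paper's `[x⃗:=a⃗]K_{x⃗}α`: distributed knowledge of the group of agents assigned by `l`. -/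
def distKnow (l : List (Xv × Ag)) (α : Formula Ag Xv Pr) : Formula Ag Xv Pr :=
  assignAll l (know (l.map Prod.fst).toFinset α)

@[simp] lemma distKnow_singleton : distKnow [(x, a)] φ = assign x a (know {x} φ) := by
  simp [distKnow]

lemma assigns_know_eq_distKnow {xs : List Xv} {as : List Ag} (h : xs.length = as.length) :
    assigns xs as (know xs.toFinset φ) = distKnow (xs.zip as) φ := by
  rw [distKnow, List.map_fst_zip h.le, assigns_eq_assignAll]

lemma sent_assignAll_of_fv_subset {l : List (Xv × Ag)} (hφ : Wf φ)
    (hfv : FV φ ⊆ (l.map Prod.fst).toFinset) : Sent (assignAll l φ) :=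
  ⟨wf_assignAll.2 hφ, by rw [fv_assignAll, Finset.sdiff_eq_empty_iff_subset]; exact hfv⟩

lemma Sent.distKnow (h : Sent φ) (l : List (Xv × Ag)) : Sent (distKnow l φ) :=
  sent_assignAll_of_fv_subset (h.wf_know _) subset_rfl

lemma subst_know_insert {y : Xv} (h : x ∉ X) :
    subst x y (know (insert x X) φ) = know (insert y X) φ := by
  have hX : X.image (fun z => if z = x then y else z) = X := by
    conv_rhs => rw [← Finset.image_id (s := X)]
    exact Finset.image_congr fun z hz => if_neg (ne_of_mem_of_not_mem hz h)
  simp [subst, Finset.image_insert, hX]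

end Formula

open Formula

namespace LEL

variable {Ag Xv Pr : Type} [DecidableEq Xv] {A B C D : Formula Ag Xv Pr} {l : List (Xv × Ag)}
  {X : Finset Xv} {x : Xv} {a : Ag}

theorem wf (h : LEL A) : Wf A := by
  induction h with
  | taut h _ => exact h
  | kk hα hβ => simp [hα.1, hα.2, hβ.1, hβ.2]
  | mono _ hα | tK hα => simp [hα.1, hα.2]
  | kasgn h₁ h₂ => simp [h₁, h₂]
  | det h | tr h _ | com h _ | ui _ h _ _ => simp [h]
  | sub h _ => simp [h, wf_subst h]
  | kni hα _ hlen =>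
    simp [assigns_eq_assignAll, hα.1, hα.2, fv_assignAll, List.map_fst_zip hlen.le]
  | epi | api => simp [dia]
  | @eni _ _ z l =>
    have hB := sent_bigAnd (l := l.map fun b => (assign z b fbot : Formula Ag Xv Pr))
      (by simp [fbot, Sent])
    simp [assigns_eq_assignAll, hB.1, hB.2]
  | mp _ _ ih _ => exact (wf_impl.1 ih).2
  | necK hα _ _ => exact hα
  | necA _ ih => exact ih

theorem mp_taut (hA : LEL A) (hB : Wf B) (ht : Tautology (impl A B)) : LEL B :=
  mp (taut (wf_impl.2 ⟨hA.wf, hB⟩) ht) hA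

theorem mp_taut₂ (hA : LEL A) (hB : LEL B) (hC : Wf C)
    (ht : Tautology (impl A (impl B C))) : LEL C :=
  mp (mp (taut (wf_impl.2 ⟨hA.wf, hB.wf, hC⟩) ht) hA) hB

theorem impl_refl (hA : Wf A) : LEL (impl A A) :=
  taut ⟨hA, hA⟩ fun v => by simp

theorem impl_of (hB : LEL B) (hA : Wf A) : LEL (impl A B) :=
  mp_taut hB ⟨hA, hB.wf⟩ fun v => by simp only [propEval_impl]; cases propEval v B <;> simp

theorem impl_trans (h₁ : LEL (impl A B)) (h₂ : LEL (impl B C)) : LEL (impl A C) :=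
  mp_taut₂ h₁ h₂ ⟨(wf_impl.1 h₁.wf).1, (wf_impl.1 h₂.wf).2⟩ fun v => by
    simp only [propEval_impl]
    cases propEval v A <;> cases propEval v B <;> cases propEval v C <;> rfl

theorem impl_and (h₁ : LEL (impl A B)) (h₂ : LEL (impl A C)) : LEL (impl A (and B C)) :=
  mp_taut₂ h₁ h₂ ⟨(wf_impl.1 h₁.wf).1, (wf_impl.1 h₁.wf).2, (wf_impl.1 h₂.wf).2⟩ fun v => by
    simp only [propEval_impl, propEval_and]
    cases propEval v A <;> cases propEval v B <;> cases propEval v C <;> rfl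

theorem and_impl_left (hA : Wf A) (hB : Wf B) : LEL (impl (and A B) A) :=
  taut ⟨⟨hA, hB⟩, hA⟩ fun v => by
    simp only [propEval_impl, propEval_and]
    cases propEval v A <;> cases propEval v B <;> rfl

theorem and_impl_right (hA : Wf A) (hB : Wf B) : LEL (impl (and A B) B) :=
  taut ⟨⟨hA, hB⟩, hB⟩ fun v => by
    simp only [propEval_impl, propEval_and]
    cases propEval v A <;> cases propEval v B <;> rfl

theorem curry (h : LEL (impl (and A B) C)) : LEL (impl A (impl B C)) := by
  obtain ⟨⟨hA, hB⟩, hC⟩ := wf_impl.1 h.wf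
  refine mp_taut h ⟨hA, hB, hC⟩ fun v => ?_
  simp only [propEval_impl, propEval_and]
  cases propEval v A <;> cases propEval v B <;> cases propEval v C <;> rfl

theorem uncurry (h : LEL (impl A (impl B C))) : LEL (impl (and A B) C) := by
  obtain ⟨hA, hB, hC⟩ := wf_impl.1 h.wf
  refine mp_taut h ⟨⟨hA, hB⟩, hC⟩ fun v => ?_
  simp only [propEval_impl, propEval_and]
  cases propEval v A <;> cases propEval v B <;> cases propEval v C <;> rfl

theorem contrapose (h : LEL (impl A B)) : LEL (impl (neg B) (neg A)) := by
  obtain ⟨hA, hB⟩ := wf_impl.1 h.wf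
  refine mp_taut h ⟨hB, hA⟩ fun v => ?_
  simp only [propEval_impl, propEval_neg]
  cases propEval v A <;> cases propEval v B <;> rfl

theorem impl_impl_of_impl_neg (h₁ : LEL (impl A (neg D))) (h₂ : LEL (impl B D)) (hC : Wf C) :
    LEL (impl A (impl B C)) :=
  mp_taut₂ h₁ h₂ ⟨(wf_impl.1 h₁.wf).1, (wf_impl.1 h₂.wf).1, hC⟩ fun v => by
    simp only [propEval_impl, propEval_neg]
    cases propEval v A <;> cases propEval v B <;> cases propEval v D <;> rfl

theorem bigAnd_impl {l : List (Formula Ag Xv Pr)} (hl : ∀ ψ ∈ l, Wf ψ) (hC : C ∈ l) :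
    LEL (impl (bigAnd l) C) := by
  induction l with
  | nil => simp at hC
  | cons ψ l ih =>
    have hψ : Wf ψ := hl ψ (by simp)
    have hl' : ∀ χ ∈ l, Wf χ := fun χ hχ => hl χ (by simp [hχ])
    rcases List.mem_cons.1 hC with rfl | hC
    · exact and_impl_left hψ (wf_bigAnd.2 hl')
    · exact (and_impl_right hψ (wf_bigAnd.2 hl')).impl_trans (ih hl' hC)

theorem impl_bigAnd {l : List (Formula Ag Xv Pr)} (hA : Wf A) (h : ∀ ψ ∈ l, LEL (impl A ψ)) :
    LEL (impl A (bigAnd l)) := by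
  induction l with
  | nil => exact impl_of (taut trivial fun _ => rfl) hA
  | cons ψ l ih => exact impl_and (h ψ (by simp)) (ih fun χ hχ => h χ (by simp [hχ]))

theorem assignAll_nec (h : LEL A) : LEL (assignAll l A) := by
  induction l with
  | nil => exact h
  | cons p l ih => exact necA ih

theorem assignAll_impl_distrib (hA : Wf A) (hB : Wf B) :
    LEL (impl (assignAll l (impl A B)) (impl (assignAll l A) (assignAll l B))) := by
  induction l with
  | nil => exact impl_refl (by simp [hA, hB])
  | cons p l ih =>
    exact ((kasgn (by simp [hA, hB]) (by simp [hA, hB])).mp (necA ih)).impl_trans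
      (kasgn (by simp [hA]) (by simp [hB]))

theorem assignAll_impl (h : LEL (assignAll l (impl A B))) :
    LEL (impl (assignAll l A) (assignAll l B)) :=
  have ⟨hA, hB⟩ := wf_impl.1 (wf_assignAll.1 h.wf)
  (assignAll_impl_distrib hA hB).mp h

theorem assignAll_mono (h : LEL (impl A B)) : LEL (impl (assignAll l A) (assignAll l B)) :=
  assignAll_impl (assignAll_nec h)

theorem assignAll_mp_taut (hA : LEL (assignAll l A)) (hB : Wf B) (ht : Tautology (impl A B)) :
    LEL (assignAll l B) :=
  (assignAll_impl (assignAll_nec (taut ⟨wf_assignAll.1 hA.wf, hB⟩ ht))).mp hA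

theorem assignAll_mp_taut₂ (hA : LEL (assignAll l A)) (hB : LEL (assignAll l B)) (hC : Wf C)
    (ht : Tautology (impl A (impl B C))) : LEL (assignAll l C) :=
  (assignAll_impl (assignAll_mp_taut hA ⟨wf_assignAll.1 hB.wf, hC⟩ ht)).mp hB

theorem assignAll_and (hA : Wf A) (hB : Wf B) :
    LEL (impl (and (assignAll l A) (assignAll l B)) (assignAll l (and A B))) := by
  have hpair : LEL (impl A (impl B (and A B))) := taut ⟨hA, hB, hA, hB⟩ fun v => by
    simp only [propEval_impl, propEval_and]
    cases propEval v A <;> cases propEval v B <;> rfl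
  exact uncurry ((assignAll_mono hpair).impl_trans (assignAll_impl_distrib hB ⟨hA, hB⟩))

theorem impl_assignAll_of_notMem_fv (hA : Wf A) (hfv : ∀ v ∈ l.map Prod.fst, v ∉ FV A) :
    LEL (impl A (assignAll l A)) := by
  induction l with
  | nil => exact impl_refl hA
  | cons p l ih =>
    refine (ih fun v hv => hfv v (by simp [hv])).impl_trans (tr (by simpa) ?_)
    rw [fv_assignAll]
    exact fun h => hfv p.1 (by simp) (Finset.mem_sdiff.1 h).1

/-- Iterating `SUB` with `x = y` and transporting the instances inward with `TR`. -/
theorem assignAll_self (hA : Wf A) : LEL (assignAll l (impl (assignAll l A) A)) := by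
  induction l with
  | nil => exact impl_refl hA
  | cons p l ih =>
    have hsub : LEL (assign p.1 p.2 (impl (assign p.1 p.2 (assignAll l A)) (assignAll l A))) := by
      simpa using sub (x := p.1) (y := p.1) (a := p.2) (wf_assignAll.2 hA) adm_self
    have htr := impl_assignAll_of_notMem_fv (l := l)
      (A := impl (assign p.1 p.2 (assignAll l A)) (assignAll l A)) (by simp [hA])
      fun v hv => by simp [fv_assignAll, List.mem_toFinset.2 hv]
    refine assignAll_mp_taut₂ (l := p :: l) ((assignAll_mono (l := [p]) htr).mp hsub)
      (necA ih) (by simp [hA]) fun v => ?_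
    simp only [propEval_impl, assignAll_cons]
    cases propEval v (assign p.1 p.2 (assignAll l A)) <;> cases propEval v (assignAll l A) <;>
      cases propEval v A <;> rfl

theorem assign_rename {v w : Xv} {b : Ag} (hA : Wf A) (hadm : Adm v w A)
    (hw : w ∉ FV A \ {v}) : LEL (impl (assign v b A) (assign w b (subst v w A))) :=
  (tr (x := w) (a := b) (φ := assign v b A) hA hw).impl_trans
    (assignAll_impl (l := [(w, b)]) (sub hA hadm))

theorem assignAll_perm (hA : Wf A) {l l' : List (Xv × Ag)} (hp : l.Perm l')
    (hnd : (l.map Prod.fst).Nodup) : LEL (impl (assignAll l A) (assignAll l' A)) := by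
  induction hp with
  | nil => exact impl_refl hA
  | cons p _ ih => exact assignAll_mono (l := [p]) (ih (List.nodup_cons.1 hnd).2)
  | swap p q l =>
    refine com (wf_assignAll.2 hA) fun h => ?_
    simp [h] at hnd
  | trans hp₁ _ ih₁ ih₂ => exact (ih₁ hnd).impl_trans (ih₂ ((hp₁.map _).nodup_iff.1 hnd))

theorem know_mono (hA : Sent A) (hB : Sent B) (h : LEL (impl A B)) :
    LEL (impl (know X A) (know X B)) :=
  (kk hA hB).mp ((mono (Finset.empty_subset X) (hA.impl hB)).mp (necK (hA.impl hB) h))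

theorem know_and (hA : Sent A) (hB : Sent B) :
    LEL (impl (and (know X A) (know X B)) (know X (and A B))) := by
  have hpair : LEL (impl A (impl B (and A B))) := taut ⟨hA.1, hB.1, hA.1, hB.1⟩ fun v => by
    simp only [propEval_impl, propEval_and]
    cases propEval v A <;> cases propEval v B <;> rfl
  exact uncurry ((know_mono hA (hB.impl (hA.and hB)) hpair).impl_trans (kk hB (hA.and hB)))

theorem know_top : LEL (know X (top : Formula Ag Xv Pr)) :=
  (mono (Finset.empty_subset X) sent_top).mp (necK sent_top (taut trivial fun _ => rfl))

theorem distKnow_mono (hA : Sent A) (hB : Sent B) (h : LEL (impl A B)) :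
    LEL (impl (distKnow l A) (distKnow l B)) :=
  assignAll_mono (know_mono hA hB h)

theorem impl_distKnow_bigAnd (hC : Wf C) {L : List (Formula Ag Xv Pr)} (hL : ∀ γ ∈ L, Sent γ)
    (h : ∀ γ ∈ L, LEL (impl C (distKnow l γ))) : LEL (impl C (distKnow l (bigAnd L))) := by
  induction L with
  | nil => exact impl_of (assignAll_nec know_top) hC
  | cons γ L ih =>
    have hγ : Sent γ := hL γ (by simp)
    have hL' : Sent (bigAnd L) := sent_bigAnd fun δ hδ => hL δ (by simp [hδ])
    exact (impl_and (h γ (by simp)) (ih (fun δ hδ => hL δ (by simp [hδ]))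
      fun δ hδ => h δ (by simp [hδ]))).impl_trans
      ((assignAll_and (hγ.wf_know _) (hL'.wf_know _)).impl_trans (assignAll_mono (know_and hγ hL')))

theorem kni_assignAll {α : Formula Ag Xv Pr} (hα : Sent α) (hnd : (l.map Prod.fst).Nodup) :
    LEL (assignAll l (impl (neg (know (l.map Prod.fst).toFinset α))
      (know (l.map Prod.fst).toFinset
        (assignAll l (neg (know (l.map Prod.fst).toFinset α)))))) := by
  have h := kni (as := l.map Prod.snd) hα hnd (by simp)
  rwa [List.toFinset, assigns_eq_assignAll, assigns_eq_assignAll, ← List.zip_of_prod rfl rfl] at h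

theorem distKnow_four {α : Formula Ag Xv Pr} (hα : Sent α) (hnd : (l.map Prod.fst).Nodup) :
    LEL (impl (distKnow l α) (distKnow l (distKnow l α))) := by
  set X := (l.map Prod.fst).toFinset
  set K : Formula Ag Xv Pr := know X α
  set N := assignAll l (neg K)
  have hK : Wf K := hα
  have hN : Sent N := sent_assignAll_of_fv_subset hK subset_rfl
  have hN₂ : Sent (assignAll l (neg (know X N))) :=
    sent_assignAll_of_fv_subset (hN.wf_know X) subset_rfl
  have h₁ : LEL (assignAll l (impl K (neg (know X N)))) := by
    refine assignAll_mp_taut₂ (assignAll_self (wf_neg.2 hK)) (assignAll_nec (tK (Xs := X) hN))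
      ⟨hK, hN.wf_know X⟩ fun v => ?_
    simp only [propEval_impl, propEval_neg]
    cases propEval v K <;> cases propEval v N <;> cases propEval v (know X N) <;> rfl
  have h₂ : LEL (assignAll l (impl K (know X (assignAll l (neg (know X N)))))) := by
    refine assignAll_mp_taut₂ h₁ (kni_assignAll hN hnd) ⟨hK, hN₂.wf_know X⟩ fun v => ?_
    simp only [propEval_impl, propEval_neg]
    cases propEval v K <;> cases propEval v (know X N) <;>
      cases propEval v (know X (assignAll l (neg (know X N)))) <;> rfl
  have h₃ : LEL (assignAll l (impl (neg (know X N)) K)) := by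
    refine assignAll_mp_taut (kni_assignAll hα hnd) ⟨hN.wf_know X, hK⟩ fun v => ?_
    simp only [propEval_impl, propEval_neg]
    cases propEval v K <;> cases propEval v (know X N) <;> rfl
  have h₄ := know_mono (X := X) hN₂ (hα.distKnow l) (assignAll_impl h₃)
  have h₅ : LEL (assignAll l (impl K (know X (distKnow l α)))) := by
    refine assignAll_mp_taut₂ h₂ (assignAll_nec h₄) ⟨hK, (hα.distKnow l).wf_know X⟩ fun v => ?_
    simp only [propEval_impl]
    cases propEval v K <;> cases propEval v (know X (assignAll l (neg (know X N)))) <;>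
      cases propEval v (know X (distKnow l α)) <;> rfl
  exact assignAll_impl h₅

theorem dia_mono (h : LEL (assign x a (impl A B))) : LEL (impl (dia x a A) (dia x a B)) := by
  obtain ⟨hA, hB⟩ := wf_impl.1 (wf_assign.1 h.wf)
  refine contrapose (assignAll_impl (l := [(x, a)])
    (assignAll_mp_taut (A := impl A B) (B := impl (neg B) (neg A)) h ⟨hB, hA⟩ fun v => ?_))
  simp only [propEval_impl, propEval_neg]
  cases propEval v A <;> cases propEval v B <;> rfl

theorem assign_and_dia_top_impl_dia (hA : Wf A) :
    LEL (impl (and (assign x a A) (dia x a top)) (dia x a A)) := by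
  have hcontra : LEL (impl (and A (neg A)) (neg top)) := taut ⟨⟨hA, hA⟩, trivial⟩ fun v => by
    simp only [propEval_impl, propEval_and, propEval_neg]
    cases propEval v A <;> rfl
  have h := (assignAll_and (l := [(x, a)]) hA (wf_neg.2 hA)).impl_trans (assignAll_mono hcontra)
  refine mp_taut h ⟨⟨hA, trivial⟩, hA⟩ fun v => ?_
  simp only [dia, propEval_impl, propEval_and, propEval_neg, assignAll_cons, assignAll_nil]
  cases propEval v (assign x a A) <;> cases propEval v (assign x a (neg A)) <;>
    cases propEval v (assign x a (neg top)) <;> rfl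

/-- `EPI` supplies the `⟨x:=a⟩⊤` that turns the known `[x:=a]A` back into `⟨x:=a⟩A`. -/
theorem dia_impl_assign_know_dia (hA : Wf A) (hfv : FV A ⊆ {x})
    (h : LEL (assign x a (impl A (know {x} (assign x a A))))) :
    LEL (impl (dia x a A) (assign x a (know {x} (dia x a A)))) := by
  have hsA : Sent (assign x a A) := sent_assign_of_fv_subset hA hfv
  have hdA : Sent (dia x a A) := sent_dia_of_fv_subset hA hfv
  have hdT : Sent (dia x a (top : Formula Ag Xv Pr)) := sent_dia_of_fv_subset trivial (by simp)
  have h₁ : LEL (impl (dia x a A) (assign x a (know {x} (assign x a A)))) :=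
    (dia_mono h).impl_trans (det (hsA.wf_know _))
  have h₂ := (assignAll_and (l := [(x, a)]) (hsA.wf_know {x}) (hdT.wf_know {x})).impl_trans
    (assignAll_mono ((know_and hsA hdT).impl_trans
      (know_mono (hsA.and hdT) hdA (assign_and_dia_top_impl_dia hA))))
  exact (impl_and h₁ (impl_of epi hdA.1)).impl_trans h₂

variable {α : Formula Ag Xv Pr} {ps qs : List (Xv × Ag)} {U : Finset Xv} {w : Xv} {c : Ag}

theorem assignAll_know_pull (hα : Sent α) {v : Xv} (hp : ps.Perm ((v, c) :: qs))
    (hnd : (ps.map Prod.fst).Nodup) (hw : w ∉ ps.map Prod.fst) (hwU : w ∉ U) (hvU : v ∉ U) :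
    LEL (impl (assignAll ps (know (U ∪ (ps.map Prod.fst).toFinset) α))
      (assign w c (assignAll qs (know (insert w U ∪ (qs.map Prod.fst).toFinset) α)))) := by
  have hpf := hp.map Prod.fst
  have hvqs : v ∉ qs.map Prod.fst := (List.nodup_cons.1 (hpf.nodup_iff.1 hnd)).1
  have hwqs : w ∉ qs.map Prod.fst := fun h => hw (hpf.mem_iff.2 (List.mem_cons_of_mem _ h))
  have hV : U ∪ (ps.map Prod.fst).toFinset = insert v (U ∪ (qs.map Prod.fst).toFinset) := by
    rw [List.toFinset_eq_of_perm _ _ hpf, List.map_cons, List.toFinset_cons, Finset.union_insert]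
  have hsubst : subst v w (assignAll qs (know (insert v (U ∪ (qs.map Prod.fst).toFinset)) α)) =
      assignAll qs (know (insert w U ∪ (qs.map Prod.fst).toFinset) α) := by
    rw [subst_assignAll hvqs, subst_know_insert (by simp [hvU, hvqs]), Finset.insert_union]
  rw [hV, ← hsubst]
  refine (assignAll_perm (hα.wf_know _) hp hnd).impl_trans
    (assign_rename (A := assignAll qs _) (wf_assignAll.2 (hα.wf_know _))
      (adm_assignAll hwqs trivial) ?_)
  simp [fv_assignAll, hwU, hwqs]

theorem assignAll_know_extend (hα : Sent α) (hwU : w ∉ U) (hw : w ∉ qs.map Prod.fst) :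
    LEL (impl (assignAll qs (know (U ∪ (qs.map Prod.fst).toFinset) α))
      (assign w c (assignAll qs (know (insert w U ∪ (qs.map Prod.fst).toFinset) α)))) := by
  refine (tr (wf_assignAll.2 (hα.wf_know _)) ?_).impl_trans
    (assignAll_mono (l := (w, c) :: qs) (mono ?_ hα))
  · simp [fv_assignAll, hwU, hw]
  · exact Finset.union_subset_union_left (Finset.subset_insert _ _)

/-- Induction on `qs`: an agent of `qs` is either pulled out of `ps` and renamed to its variable
in `qs`, or is new and is added by `TR` and `MONO`; `U` collects the variables of `qs` already
introduced. -/
theorem assignAll_know_union_impl (hα : Sent α) (hq : (qs.map Prod.fst).Nodup)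
    (hnd : (ps.map Prod.fst).Nodup) (hnd₂ : (ps.map Prod.snd).Nodup)
    (hsub : ∀ a ∈ ps.map Prod.snd, a ∈ qs.map Prod.snd)
    (hfresh : ∀ w ∈ qs.map Prod.fst, w ∉ ps.map Prod.fst ∧ w ∉ U)
    (hU : ∀ v ∈ ps.map Prod.fst, v ∉ U) :
    LEL (impl (assignAll ps (know (U ∪ (ps.map Prod.fst).toFinset) α))
      (assignAll qs (know (U ∪ (qs.map Prod.fst).toFinset) α))) := by
  induction qs generalizing ps U with
  | nil =>
    obtain rfl : ps = [] := List.eq_nil_iff_forall_not_mem.2 fun p hp =>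
      by simpa using hsub p.2 (List.mem_map_of_mem hp)
    exact impl_refl (hα.wf_know _)
  | cons q qs ih =>
    obtain ⟨w, c⟩ := q
    simp only [List.map_cons, List.nodup_cons, List.mem_cons, forall_eq_or_imp] at hq hsub hfresh
    rw [List.map_cons, List.toFinset_cons, Finset.union_insert, ← Finset.insert_union]
    by_cases hc : c ∈ ps.map Prod.snd
    · obtain ⟨⟨v, c⟩, hmem, rfl⟩ := List.mem_map.1 hc
      obtain ⟨l₁, l₂, rfl⟩ := List.append_of_mem hmem
      have hmap {β : Type} (f : Xv × Ag → β) {b : β} (h : b ∈ (l₁ ++ l₂).map f) :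
          b ∈ (l₁ ++ (v, c) :: l₂).map f := by
        obtain ⟨p, hp, rfl⟩ := List.mem_map.1 h
        exact List.mem_map_of_mem (List.perm_middle.mem_iff.2 (List.mem_cons_of_mem _ hp))
      refine (assignAll_know_pull hα List.perm_middle hnd hfresh.1.1 hfresh.1.2
        (hU v (by simp))).impl_trans (assignAll_mono (l := [(w, _)]) (ih hq.2 ?_ ?_ ?_ ?_ ?_))
      · exact ((List.perm_middle.map _).nodup_iff.1 hnd).of_cons
      · exact ((List.perm_middle.map _).nodup_iff.1 hnd₂).of_cons
      · intro a ha
        refine (hsub a (hmap _ ha)).resolve_left ?_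
        rintro rfl
        exact (List.nodup_cons.1 ((List.perm_middle.map _).nodup_iff.1 hnd₂)).1 ha
      · intro w' hw'
        refine ⟨fun h => (hfresh.2 w' hw').1 (hmap _ h), ?_⟩
        simp [(hfresh.2 w' hw').2, ne_of_mem_of_not_mem hw' hq.1]
      · intro v' hv'
        simp [hU v' (hmap _ hv'), ne_of_mem_of_not_mem (hmap _ hv') hfresh.1.1]
    · refine (ih hq.2 hnd hnd₂ (fun a ha => (hsub a ha).resolve_left ?_) hfresh.2 hU).impl_trans
        (assignAll_know_extend hα hfresh.1.2 hq.1)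
      rintro rfl
      exact hc ha

/-- Going through fresh variables first lets `assignAll_know_union_impl` apply even when
the variables of `ps` and `qs` overlap. -/
theorem distKnow_impl_distKnow_of_subset [Infinite Xv] (hα : Sent α)
    (hps : (ps.map Prod.fst).Nodup) (hps₂ : (ps.map Prod.snd).Nodup)
    (hqs : (qs.map Prod.fst).Nodup) (hqs₂ : (qs.map Prod.snd).Nodup)
    (hsub : ∀ a ∈ ps.map Prod.snd, a ∈ qs.map Prod.snd) :
    LEL (impl (distKnow ps α) (distKnow qs α)) := by
  obtain ⟨ws, hlen, hws, hfresh⟩ := Infinite.exists_nodup_list_forall_notMem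
    ((ps.map Prod.fst).toFinset ∪ (qs.map Prod.fst).toFinset) qs.length
  set rs := ws.zip (qs.map Prod.snd)
  have hrs₁ : rs.map Prod.fst = ws := List.map_fst_zip (by simp [hlen])
  have hrs₂ : rs.map Prod.snd = qs.map Prod.snd := List.map_snd_zip (by simp [hlen])
  have h₁ := assignAll_know_union_impl (qs := rs) (U := ∅) hα (hrs₁ ▸ hws) hps hps₂ (hrs₂ ▸ hsub)
    (fun w hw => ⟨fun h => hfresh w (hrs₁ ▸ hw) (by simp [h]), by simp⟩) (by simp)
  have h₂ := assignAll_know_union_impl (ps := rs) (U := ∅) hα hqs (hrs₁ ▸ hws) (hrs₂ ▸ hqs₂)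
    (by simp [hrs₂])
    (fun w hw => ⟨fun h => hfresh w (hrs₁ ▸ h) (by simp [hw]), by simp⟩) (by simp)
  simp only [Finset.empty_union] at h₁ h₂
  exact h₁.impl_trans h₂

end LEL

open LEL

lemma distKnow_zip_mono {Ag Xv Pr : Type} [DecidableEq Xv] [Infinite Xv] {α : Formula Ag Xv Pr}
    {ea : Finset Ag → List Ag} {ev : Finset Ag → List Xv}
    (hea : ∀ S, (ea S).Nodup ∧ ∀ a, a ∈ ea S ↔ a ∈ S)
    (hev : ∀ S, (ev S).Nodup ∧ (ev S).length = (ea S).length) (hα : Sent α) {B S : Finset Ag}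
    (hBS : B ⊆ S) :
    LEL (impl (distKnow ((ev B).zip (ea B)) α) (distKnow ((ev S).zip (ea S)) α)) := by
  have hfst (S) : ((ev S).zip (ea S)).map Prod.fst = ev S := List.map_fst_zip (hev S).2.le
  have hsnd (S) : ((ev S).zip (ea S)).map Prod.snd = ea S := List.map_snd_zip (hev S).2.ge
  refine distKnow_impl_distKnow_of_subset hα ?_ ?_ ?_ ?_ ?_ <;>
    simp only [hfst, hsnd, hev, hea]
  exact fun a ha => hBS ha

section IntensionalKnowledge

variable {Ag Xv Pr : Type} [Fintype Ag] [DecidableEq Ag] [DecidableEq Xv]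
  {φ α : Formula Ag Xv Pr} {x : Xv} {ea : Finset Ag → List Ag} {ev : Finset Ag → List Xv}

lemma sent_bang (hφ : Wf φ) (hfv : FV φ ⊆ {x}) (S : Finset Ag) : Sent (bang φ x ea S) :=
  (sent_bigAnd (List.forall_mem_map.2 fun _ _ => sent_dia_of_fv_subset hφ hfv)).and
    (sent_bigAnd (List.forall_mem_map.2 fun _ _ => sent_assign_of_fv_subset (φ := neg φ) hφ hfv))

lemma bang_impl_dia (hφ : Wf φ) (hfv : FV φ ⊆ {x}) {S : Finset Ag} {a : Ag} (ha : a ∈ ea S) :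
    LEL (impl (bang φ x ea S) (dia x a φ)) :=
  (and_impl_left (sent_bang hφ hfv S).1.1 (sent_bang hφ hfv S).1.2).impl_trans
    (bigAnd_impl (List.forall_mem_map.2 fun _ _ => hφ) (List.mem_map_of_mem ha))

lemma bang_impl_assign_neg (hφ : Wf φ) (hfv : FV φ ⊆ {x}) {S : Finset Ag} {a : Ag}
    (ha : a ∈ ea Sᶜ) : LEL (impl (bang φ x ea S) (assign x a (neg φ))) :=
  (and_impl_right (sent_bang hφ hfv S).1.1 (sent_bang hφ hfv S).1.2).impl_trans
    (bigAnd_impl (List.forall_mem_map.2 fun _ _ => hφ) (List.mem_map_of_mem ha))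

lemma sent_Kint (hφ : Wf φ) (hfv : FV φ ⊆ {x})
    (hlen : ∀ S, (ev S).length = (ea S).length) (hα : Sent α) : Sent (Kint φ x ea ev α) :=
  sent_bigAnd <| List.forall_mem_map.2 fun S _ =>
    (sent_bang hφ hfv S).impl (assigns_know_eq_distKnow (hlen S) ▸ hα.distKnow _)

/-- Every group `S` with `φ!(S)` contains `B`. -/
theorem dia_and_distKnow_impl_Kint [Infinite Xv] (hφ : Wf φ) (hfv : FV φ ⊆ {x})
    (hea : ∀ S, (ea S).Nodup ∧ ∀ a, a ∈ ea S ↔ a ∈ S)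
    (hev : ∀ S, (ev S).Nodup ∧ (ev S).length = (ea S).length) (hα : Sent α) (B : Finset Ag) :
    LEL (impl (bigAnd (distKnow ((ev B).zip (ea B)) α :: (ea B).map fun a => dia x a φ))
      (Kint φ x ea ev α)) := by
  have hΘ : Sent (bigAnd (distKnow ((ev B).zip (ea B)) α :: (ea B).map fun a => dia x a φ)) :=
    sent_bigAnd (List.forall_mem_cons.2 ⟨hα.distKnow _,
      List.forall_mem_map.2 fun _ _ => sent_dia_of_fv_subset hφ hfv⟩)
  have hwf : ∀ ψ ∈ distKnow ((ev B).zip (ea B)) α :: (ea B).map fun a => dia x a φ, Wf ψ :=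
    List.forall_mem_cons.2 ⟨(hα.distKnow _).1, List.forall_mem_map.2 fun _ _ => hφ⟩
  refine impl_bigAnd hΘ.1 (List.forall_mem_map.2 fun S _ => ?_)
  rw [assigns_know_eq_distKnow (hev S).2]
  by_cases hBS : B ⊆ S
  · exact curry ((and_impl_left hΘ.1 (sent_bang hφ hfv S).1).impl_trans
      ((bigAnd_impl hwf List.mem_cons_self).impl_trans (distKnow_zip_mono hea hev hα hBS)))
  · obtain ⟨a, haB, haS⟩ := Finset.not_subset.1 hBS
    exact impl_impl_of_impl_neg
      (bigAnd_impl hwf (List.mem_cons_of_mem _ (List.mem_map_of_mem ((hea B).2 a |>.2 haB))))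
      (bang_impl_assign_neg hφ hfv ((hea Sᶜ).2 a |>.2 (Finset.mem_compl.2 haS)))
      (hα.distKnow _).1

lemma Kint_impl_bang_impl_distKnow (hφ : Wf φ) (hfv : FV φ ⊆ {x})
    (hlen : ∀ S, (ev S).length = (ea S).length) (hα : Sent α) (B : Finset Ag) :
    LEL (impl (Kint φ x ea ev α) (impl (bang φ x ea B) (distKnow ((ev B).zip (ea B)) α))) := by
  have h := bigAnd_impl (wf_bigAnd.1 (sent_Kint hφ hfv hlen hα).1)
    (List.mem_map_of_mem (f := fun S => impl (bang φ x ea S)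
      (assigns (ev S) (ea S) (know (ev S).toFinset α))) (Finset.mem_toList.2 (Finset.mem_univ B)))
  rwa [assigns_know_eq_distKnow (hlen B)] at h

theorem bang_impl_distKnow_dia [Infinite Xv] (hφ : Wf φ) (hfv : FV φ ⊆ {x}) {a : Ag}
    (hintro : LEL (assign x a (impl φ (know {x} (assign x a φ)))))
    (hea : ∀ S, (ea S).Nodup ∧ ∀ a, a ∈ ea S ↔ a ∈ S)
    (hev : ∀ S, (ev S).Nodup ∧ (ev S).length = (ea S).length) {B : Finset Ag} (ha : a ∈ ea B) :
    LEL (impl (bang φ x ea B) (distKnow ((ev B).zip (ea B)) (dia x a φ))) := by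
  have hsub := distKnow_impl_distKnow_of_subset (ps := [(x, a)]) (qs := (ev B).zip (ea B))
    (sent_dia_of_fv_subset (a := a) hφ hfv) (by simp) (by simp)
    (by rw [List.map_fst_zip (hev B).2.le]; exact (hev B).1)
    (by rw [List.map_snd_zip (hev B).2.ge]; exact (hea B).1)
    (by simpa [List.map_snd_zip (hev B).2.ge] using ha)
  rw [distKnow_singleton] at hsub
  exact (bang_impl_dia hφ hfv ha).impl_trans
    ((dia_impl_assign_know_dia hφ hfv hintro).impl_trans hsub)

theorem Kint_impl_bang_impl_distKnow_Kint [Infinite Xv] (hφ : Wf φ) (hfv : FV φ ⊆ {x})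
    (hintro : ∀ a, LEL (assign x a (impl φ (know {x} (assign x a φ)))))
    (hea : ∀ S, (ea S).Nodup ∧ ∀ a, a ∈ ea S ↔ a ∈ S)
    (hev : ∀ S, (ev S).Nodup ∧ (ev S).length = (ea S).length) (hα : Sent α) (B : Finset Ag) :
    LEL (impl (Kint φ x ea ev α)
      (impl (bang φ x ea B) (distKnow ((ev B).zip (ea B)) (Kint φ x ea ev α)))) := by
  have hKα : Sent (Kint φ x ea ev α) := sent_Kint hφ hfv (fun S => (hev S).2) hα
  have hB := sent_bang (ea := ea) hφ hfv B
  have hΘ : ∀ γ ∈ distKnow ((ev B).zip (ea B)) α :: (ea B).map fun a => dia x a φ, Sent γ :=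
    List.forall_mem_cons.2 ⟨hα.distKnow _,
      List.forall_mem_map.2 fun _ _ => sent_dia_of_fv_subset hφ hfv⟩
  have hknow := (uncurry (Kint_impl_bang_impl_distKnow hφ hfv (fun S => (hev S).2) hα B)).impl_trans
    (distKnow_four hα (by rw [List.map_fst_zip (hev B).2.le]; exact (hev B).1))
  have hG := impl_distKnow_bigAnd (wf_and.2 ⟨hKα.1, hB.1⟩) hΘ
    (List.forall_mem_cons.2 ⟨hknow, List.forall_mem_map.2 fun a ha =>
      (and_impl_right hKα.1 hB.1).impl_trans (bang_impl_distKnow_dia hφ hfv (hintro a) hea hev ha)⟩)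
  exact curry (hG.impl_trans (distKnow_mono (sent_bigAnd hΘ) hKα
    (dia_and_distKnow_impl_Kint hφ hfv hea hev hα B)))

end IntensionalKnowledge

theorem intensional_positive_introspection_general
    {Ag Xv Pr : Type} [Fintype Ag] [DecidableEq Ag]
    [DecidableEq Xv] [Infinite Xv]
    (x : Xv) (φ : Formula Ag Xv Pr) (hwf : Formula.Wf φ) (hfv : Formula.FV φ ⊆ {x})
    (hintro : ∀ a : Ag,
      LEL (.assign x a (Formula.impl φ (.know {x} (.assign x a φ)))))
    (ea : Finset Ag → List Ag) (ev : Finset Ag → List Xv)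
    (hea : ∀ S : Finset Ag, (ea S).Nodup ∧ ∀ a : Ag, a ∈ ea S ↔ a ∈ S)
    (hev : ∀ S : Finset Ag, (ev S).Nodup ∧ (ev S).length = (ea S).length ∧ x ∉ ev S)
    (α : Formula Ag Xv Pr) (hα : Formula.Sent α) :
    LEL (Formula.impl (Kint φ x ea ev α) (Kint φ x ea ev (Kint φ x ea ev α))) := by
  have hev' (S : Finset Ag) : (ev S).Nodup ∧ (ev S).length = (ea S).length :=
    ⟨(hev S).1, (hev S).2.1⟩
  refine impl_bigAnd (sent_Kint hwf hfv (fun S => (hev S).2.1) hα).1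
    (List.forall_mem_map.2 fun B _ => ?_)
  rw [assigns_know_eq_distKnow (hev B).2.1]
  exact Kint_impl_bang_impl_distKnow_Kint hwf hfv hintro hea hev' hα B

/-- if the defining property `φ` is positively introspective, then
the intensional distributed knowledge `K_φ` satisfies positive introspection. -/
theorem intensional_positive_introspection
    {Ag Xv Pr : Type} [Fintype Ag] [Nonempty Ag] [DecidableEq Ag]
    [DecidableEq Xv] [Countable Xv] [Infinite Xv] [Countable Pr]
    (x : Xv) (φ : Formula Ag Xv Pr) (hwf : Formula.Wf φ) (hfv : Formula.FV φ ⊆ {x})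
    (hintro : ∀ a : Ag,
      LEL (.assign x a (Formula.impl φ (.know {x} (.assign x a φ)))))
    (ea : Finset Ag → List Ag) (ev : Finset Ag → List Xv)
    (hea : ∀ S : Finset Ag, (ea S).Nodup ∧ ∀ a : Ag, a ∈ ea S ↔ a ∈ S)
    (hev : ∀ S : Finset Ag, (ev S).Nodup ∧ (ev S).length = (ea S).length ∧ x ∉ ev S)
    (α : Formula Ag Xv Pr) (hα : Formula.Sent α) :
    LEL (Formula.impl (Kint φ x ea ev α) (Kint φ x ea ev (Kint φ x ea ev α))) :=
  intensional_positive_introspection_general x φ hwf hfv hintro ea ev hea hev α hα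

end SimplicialEpistemic
end
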